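/- Let s be a constellation of length J admissible for all primes q ≤ p. Then the number of residue classes γ_0 modulo p# (the primorial of p) for which every partial sum γ_j (0 ≤ j ≤ J) is coprime to p# equals ∏_{q ≤ p, q prime} (q - ν_q(s)). -/

import Mathlib

open Finset

lemma card_filter_crt (a M : ℕ) (h : Nat.Coprime a M)
    (P Q : ℕ → Prop) [DecidablePred P] [DecidablePred Q] :
    (filter (fun x => P (x % a) ∧ Q (x % M)) (range (a * M))).card
      = (filter P (range a)).card * (filter Q (range M)).card := by
  classical
  rcases Nat.eq_zero_or_pos a with rfl | ha
  · simp
  rcases Nat.eq_zero_or_pos M with rfl | hM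
  · simp
  rw [← Finset.card_product, ← Finset.filter_product]
  apply Finset.card_bij' (fun x _ => (x % a, x % M))
    (fun r _ => (Nat.chineseRemainder h r.1 r.2 : ℕ) % (a * M))
  · intro x hx
    simp only [Finset.mem_filter, Finset.mem_product, Finset.mem_range] at hx ⊢
    exact ⟨⟨Nat.mod_lt _ ha, Nat.mod_lt _ hM⟩, hx.2⟩
  · intro r hr
    simp only [Finset.mem_filter, Finset.mem_product, Finset.mem_range] at hr ⊢
    obtain ⟨hk1, hk2⟩ := (Nat.chineseRemainder h r.1 r.2).2
    have h1 : ((Nat.chineseRemainder h r.1 r.2 : ℕ) % (a * M)) % a = r.1 := by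
      rw [Nat.mod_mod_of_dvd _ ⟨M, rfl⟩]
      rw [show (Nat.chineseRemainder h r.1 r.2 : ℕ) % a = r.1 % a from hk1,
        Nat.mod_eq_of_lt hr.1.1]
    have h2 : ((Nat.chineseRemainder h r.1 r.2 : ℕ) % (a * M)) % M = r.2 := by
      rw [Nat.mod_mod_of_dvd _ ⟨a, mul_comm a M⟩]
      rw [show (Nat.chineseRemainder h r.1 r.2 : ℕ) % M = r.2 % M from hk2,
        Nat.mod_eq_of_lt hr.1.2]
    refine ⟨Nat.mod_lt _ (Nat.mul_pos ha hM), ?_, ?_⟩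
    · rw [h1]; exact hr.2.1
    · rw [h2]; exact hr.2.2
  · intro x hx
    simp only [Finset.mem_filter, Finset.mem_range] at hx
    obtain ⟨hk1, hk2⟩ := (Nat.chineseRemainder h (x % a) (x % M)).2
    have : (Nat.chineseRemainder h (x % a) (x % M) : ℕ) ≡ x [MOD a * M] := by
      rw [← Nat.modEq_and_modEq_iff_modEq_mul h]
      exact ⟨hk1.trans (Nat.mod_modEq x a), hk2.trans (Nat.mod_modEq x M)⟩
    calc (Nat.chineseRemainder h (x % a) (x % M) : ℕ) % (a * M)
        = x % (a * M) := this
      _ = x := Nat.mod_eq_of_lt hx.1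
  · intro r hr
    simp only [Finset.mem_filter, Finset.mem_product, Finset.mem_range] at hr
    obtain ⟨hk1, hk2⟩ := (Nat.chineseRemainder h r.1 r.2).2
    have h1 : ((Nat.chineseRemainder h r.1 r.2 : ℕ) % (a * M)) % a = r.1 := by
      rw [Nat.mod_mod_of_dvd _ ⟨M, rfl⟩]
      rw [show (Nat.chineseRemainder h r.1 r.2 : ℕ) % a = r.1 % a from hk1,
        Nat.mod_eq_of_lt hr.1.1]
    have h2 : ((Nat.chineseRemainder h r.1 r.2 : ℕ) % (a * M)) % M = r.2 := by
      rw [Nat.mod_mod_of_dvd _ ⟨a, mul_comm a M⟩]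
      rw [show (Nat.chineseRemainder h r.1 r.2 : ℕ) % M = r.2 % M from hk2,
        Nat.mod_eq_of_lt hr.1.2]
    exact Prod.ext h1 h2

lemma count_prod (F : ℕ → ℕ → Prop) [∀ q r, Decidable (F q r)] :
    ∀ (Q : Finset ℕ), (Set.Pairwise ↑Q Nat.Coprime) →
    (filter (fun x => ∀ q ∈ Q, F q (x % q)) (range (∏ q ∈ Q, q))).card
      = ∏ q ∈ Q, (filter (F q) (range q)).card := by
  classical
  intro Q
  induction Q using Finset.induction_on with
  | empty => simp
  | @insert a s has ih =>
    intro hpw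
    have hpw' : Set.Pairwise ↑s Nat.Coprime := by
      apply hpw.mono
      simp [Finset.coe_insert, Set.subset_insert]
    have hcop : Nat.Coprime a (∏ q ∈ s, q) := by
      apply Nat.Coprime.prod_right
      intro q hq
      exact hpw (by simp) (by simp [hq]) (fun hEq => has (hEq ▸ hq))
    rw [Finset.prod_insert has, Finset.prod_insert has, ← ih hpw', ← card_filter_crt _ _ hcop]
    congr 1
    apply Finset.filter_congr
    intro x _
    simp only [Finset.forall_mem_insert, eq_iff_iff]
    constructor
    · rintro ⟨h1, h2⟩
      refine ⟨h1, fun q hq => ?_⟩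
      rw [Nat.mod_mod_of_dvd _ (Finset.dvd_prod_of_mem _ hq)]
      exact h2 q hq
    · rintro ⟨h1, h2⟩
      refine ⟨h1, fun q hq => ?_⟩
      have := h2 q hq
      rwa [Nat.mod_mod_of_dvd x (Finset.dvd_prod_of_mem _ hq)] at this

lemma crux (q r t : ℕ) (hq : 0 < q) (hr : r < q) (ht : t < q) :
    (r + t) % q = 0 ↔ r = (q - t) % q := by
  have hmod : (r + t) % q = if r + t < q then r + t else r + t - q := by
    split
    · exact Nat.mod_eq_of_lt (by omega)
    · rw [Nat.mod_eq_sub_mod (by omega), Nat.mod_eq_of_lt (by omega)]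
  have hneg : (q - t) % q = if t = 0 then 0 else q - t := by
    split
    · simp only [*, Nat.sub_zero, Nat.mod_self]
    · exact Nat.mod_eq_of_lt (by omega)
  rw [hmod, hneg]
  split_ifs <;> omega

lemma neg_mod_invol {q x : ℕ} (hx : x < q) : (q - (q - x) % q) % q = x := by
  rcases Nat.eq_zero_or_pos x with rfl | hx0
  · simp [Nat.mod_self]
  · rw [Nat.mod_eq_of_lt (show q - x < q by omega),
      Nat.mod_eq_of_lt (show q - (q - x) < q by omega)]
    omega

lemma per_prime_count (q J : ℕ) (hq : 0 < q) (S : ℕ → ℕ) :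
    (filter (fun r => ∀ j ≤ J, (r + S j) % q ≠ 0) (range q)).card
      = q - (Finset.image (fun j => S j % q) (range (J + 1))).card := by
  classical
  set ν := Finset.image (fun j => S j % q) (range (J + 1)) with hν
  have hνsub : ν ⊆ range q := by
    intro x hx
    simp only [hν, Finset.mem_image] at hx
    obtain ⟨j, _, rfl⟩ := hx
    exact Finset.mem_range.mpr (Nat.mod_lt _ hq)
  set B := Finset.image (fun x => (q - x) % q) ν with hB
  have hBsub : B ⊆ range q := by
    intro x hx
    simp only [hB, Finset.mem_image] at hx
    obtain ⟨y, _, rfl⟩ := hx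
    exact Finset.mem_range.mpr (Nat.mod_lt _ hq)
  have hBcard : B.card = ν.card := by
    rw [hB]
    apply Finset.card_image_of_injOn
    intro x hx y hy hEq
    have hx' := Finset.mem_range.mp (hνsub hx)
    have hy' := Finset.mem_range.mp (hνsub hy)
    have := congrArg (fun z => (q - z) % q) hEq
    simpa [neg_mod_invol hx', neg_mod_invol hy'] using this
  have hB2 : B = Finset.image (fun j => (q - S j % q) % q) (range (J + 1)) := by
    rw [hB, hν, Finset.image_image]
    rfl
  have key : filter (fun r => ∀ j ≤ J, (r + S j) % q ≠ 0) (range q) = range q \ B := by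
    ext r
    simp only [Finset.mem_filter, Finset.mem_sdiff, Finset.mem_range, hB2,
      Finset.mem_image, Finset.mem_range, not_exists]
    have hconv : ∀ j, r < q → (r + S j) % q = (r + S j % q) % q := by
      intro j hr
      conv_lhs => rw [Nat.add_mod]
      rw [Nat.mod_eq_of_lt hr]
    constructor
    · rintro ⟨hr, hall⟩
      refine ⟨hr, fun j hj => ?_⟩
      obtain ⟨hj1, hj2⟩ := hj
      exact hall j (by omega)
        (by rw [hconv j hr]; exact (crux q r _ hq hr (Nat.mod_lt _ hq)).mpr hj2.symm)
    · rintro ⟨hr, hnone⟩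
      refine ⟨hr, fun j hj hEq => ?_⟩
      exact hnone j ⟨by omega, ((crux q r (S j % q) hq hr (Nat.mod_lt _ hq)).mp
        (by rw [← hconv j hr]; exact hEq)).symm⟩
  rw [key, Finset.card_sdiff_of_subset hBsub, Finset.card_range, hBcard]

/-- If s is admissible for all primes q ≤ p, the number of residue classes γ0 mod p#
    whose partial sums are all coprime to p# equals ∏_{q ≤ p prime} (q - ν_q(s)). -/
theorem stmt16 (J p : ℕ) (hp : p.Prime) (g : ℕ → ℕ) (hg : ∀ i, i < J → 0 < g i)
    (hadm : ∀ q, q.Prime → q ≤ p →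
      ∃ r < q, ∀ j ≤ J, (r + ∑ i ∈ Finset.range j, g i) % q ≠ 0) :
    (Finset.filter
        (fun γ0 => ∀ j ≤ J, Nat.Coprime (γ0 + ∑ i ∈ Finset.range j, g i) (primorial p))
        (Finset.range (primorial p))).card
      = ∏ q ∈ Finset.filter Nat.Prime (Finset.range (p + 1)),
          (q - (Finset.image (fun j => (∑ i ∈ Finset.range j, g i) % q)
              (Finset.range (J + 1))).card) := by
  classical
  set P := Finset.filter Nat.Prime (Finset.range (p + 1)) with hPdef
  have hP : ∀ q ∈ P, q.Prime := fun q hq => (Finset.mem_filter.mp hq).2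
  have hpw : Set.Pairwise ↑P Nat.Coprime := by
    intro q hq r hr hne
    exact (Nat.coprime_primes (hP q (Finset.mem_coe.mp hq))
      (hP r (Finset.mem_coe.mp hr))).mpr hne
  have hprim : primorial p = ∏ q ∈ P, q := rfl
  rw [hprim]
  have step1 : Finset.filter
      (fun γ0 => ∀ j ≤ J, Nat.Coprime (γ0 + ∑ i ∈ Finset.range j, g i) (∏ q ∈ P, q))
      (Finset.range (∏ q ∈ P, q))
    = Finset.filter
      (fun x => ∀ q ∈ P, ∀ j ≤ J, (x % q + ∑ i ∈ Finset.range j, g i) % q ≠ 0)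
      (Finset.range (∏ q ∈ P, q)) := by
    apply Finset.filter_congr
    intro x _
    have hiff : ∀ j q, q ∈ P →
        (Nat.Coprime (x + ∑ i ∈ Finset.range j, g i) q ↔
          (x % q + ∑ i ∈ Finset.range j, g i) % q ≠ 0) := by
      intro j q hq
      rw [Nat.mod_add_mod, Nat.coprime_comm, (hP q hq).coprime_iff_not_dvd,
        Nat.dvd_iff_mod_eq_zero]
    constructor
    · intro h q hq j hj
      exact (hiff j q hq).mp (Nat.coprime_prod_right_iff.mp (h j hj) q hq)
    · intro h j hj
      exact Nat.coprime_prod_right_iff.mpr fun q hq => (hiff j q hq).mpr (h q hq j hj)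
  rw [step1,
    count_prod (fun q r => ∀ j ≤ J, (r + ∑ i ∈ Finset.range j, g i) % q ≠ 0) P hpw]
  exact Finset.prod_congr rfl fun q hq =>
    per_prime_count q J (hP q hq).pos (fun j => ∑ i ∈ Finset.range j, g i)
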